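/- Let q ∈ ℝ and k ∈ (0,2π) with k ≠ π. Define on ℓ²(ℤ) the multiplication operators W' by W'(n) := q sin(kn)/n (with sin(0)/0 := 1, so W'(0) = q) and W̃ by W̃(n) := q sin(kn), and set K_{W'} := ½(W'(S*+S) + (S*+S)W') and B_{W'} := W̃(S*−S) − (S*−S)W̃. Then K_{W'} is compact, B_{W'} is bounded, and for every finitely supported u ∈ ℓ²(ℤ), i(W'(A₀u) − A₀(W'u)) = (K_{W'} + B_{W'})u; that is, the commutator form [W', iA₀] extends to the bounded operator K_{W'} + B_{W'}. -/

import Mathlib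

noncomputable section

open scoped ENNReal

/-- The Hilbert space ℓ²(ℤ). -/
abbrev l2Z : Type := lp (fun _ : ℤ => ℂ) 2

/-- The generator of dilations A₀ := i(½(S*+S) − (S*−S)N), acting on functions ℤ → ℂ:
(A₀u)(n) = i( ½(u(n+1)+u(n−1)) − ((n+1)u(n+1) − (n−1)u(n−1)) ). -/
def A0fun1 (u : ℤ → ℂ) (n : ℤ) : ℂ :=
  Complex.I * ((u (n + 1) + u (n - 1)) / 2 -
    (((n : ℂ) + 1) * u (n + 1) - ((n : ℂ) - 1) * u (n - 1)))

/-- W'(n) = q·sin(kn)/n with W'(0) = q. -/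
def WvN1' (q k : ℝ) (n : ℤ) : ℝ :=
  if n = 0 then q else q * Real.sin (k * n) / (n : ℝ)

/-- W̃(n) = q·sin(kn). -/
def WvN1t (q k : ℝ) (n : ℤ) : ℝ := q * Real.sin (k * n)

/-- K_{W'} = ½(W'(S*+S) + (S*+S)W'), acting on functions. -/
def KW'fun (q k : ℝ) (u : ℤ → ℂ) (n : ℤ) : ℂ :=
  (1 / 2 : ℂ) * ((WvN1' q k n : ℂ) * (u (n + 1) + u (n - 1)) +
    ((WvN1' q k (n + 1) : ℂ) * u (n + 1) + (WvN1' q k (n - 1) : ℂ) * u (n - 1)))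

/-- B_{W'} = W̃(S*−S) − (S*−S)W̃, acting on functions. -/
def BW'fun (q k : ℝ) (u : ℤ → ℂ) (n : ℤ) : ℂ :=
  (WvN1t q k n : ℂ) * (u (n + 1) - u (n - 1)) -
    ((WvN1t q k (n + 1) : ℂ) * u (n + 1) - (WvN1t q k (n - 1) : ℂ) * u (n - 1))

/-
K_{W'} is compact because W' is a c₀-sequence (|W'(n)| ≤ |q|/|n|): multiplication by a c₀-sequence
is the norm limit of multiplications by its finite truncations, which have finite rank, and K_{W'}
is that compact operator composed on either side with the bounded operator S* + S. The commutator
identity is pointwise algebra, the only input being n W'(n) = W̃(n): the position operator N in A₀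
turns W' into W̃.
-/

open Filter Topology

namespace lp

lemma hasSum_single_infty_of_tendsto_zero {α : Type*} [DecidableEq α] {E : α → Type*}
    [∀ i, NormedAddCommGroup (E i)] (f : lp E ∞)
    (hf : Tendsto (fun i => ‖f i‖) cofinite (𝓝 0)) :
    HasSum (fun i => lp.single ∞ i (f i)) f := by
  rw [HasSum, Metric.tendsto_nhds]
  intro ε hε
  have hfin : {i | ε / 2 ≤ ‖f i‖}.Finite := by
    simpa using hf.eventually (gt_mem_nhds (half_pos hε))
  filter_upwards [eventually_ge_atTop hfin.toFinset] with s hs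
  rw [dist_eq_norm]
  refine (norm_le_of_forall_le (half_pos hε).le fun j => ?_).trans_lt (half_lt_self hε)
  simp only [coeFn_sub, Pi.sub_apply, coeFn_sum, lp.coeFn_single, Finset.sum_apply,
    Finset.sum_pi_single]
  split_ifs with hj
  · simp [(half_pos hε).le]
  · have : ‖f j‖ < ε / 2 := not_le.1 fun h => hj (hs (hfin.mem_toFinset.2 h))
    simpa using this.le

variable {𝕜 : Type*} [RCLike 𝕜] {α : Type*} {p : ℝ≥0∞} [Fact (1 ≤ p)]

section Multiplication

variable (𝕜 p) in
def mulCLM :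
    lp (fun _ : α => 𝕜) ∞ →L[𝕜] lp (fun _ : α => 𝕜) p →L[𝕜] lp (fun _ : α => 𝕜) p :=
  holderL p (fun _ => ContinuousLinearMap.mul 𝕜 𝕜) (K := 1) fun _ =>
    ContinuousLinearMap.opNorm_mul_le 𝕜 𝕜

@[simp] lemma mulCLM_apply_apply (w : lp (fun _ : α => 𝕜) ∞) (u : lp (fun _ : α => 𝕜) p)
    (i : α) : mulCLM 𝕜 p w u i = w i * u i := rfl

lemma isCompactOperator_mulCLM_single [DecidableEq α] (i : α) (c : 𝕜) :
    IsCompactOperator (mulCLM 𝕜 p (lp.single ∞ i c)) := by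
  let φ := evalCLM 𝕜 (fun _ : α => 𝕜) p i
  let x := lp.single (E := fun _ : α => 𝕜) p i c
  have hrank_one :
      mulCLM 𝕜 p (lp.single ∞ i c) = (ContinuousLinearMap.toSpanSingleton 𝕜 x).comp φ := by
    ext u j
    by_cases h : j = i
    · subst h; simp [φ, x, evalCLM, mul_comm]
    · simp [x, h]
  rw [hrank_one]
  exact (isCompactOperator_of_locallyCompactSpace_dom φ).clm_comp
    (ContinuousLinearMap.toSpanSingleton 𝕜 x)

lemma isCompactOperator_mulCLM_of_tendsto_zero (w : lp (fun _ : α => 𝕜) ∞)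
    (hw : Tendsto (⇑w) cofinite (𝓝 0)) : IsCompactOperator (mulCLM 𝕜 p w) := by
  classical
  have hsum := (mulCLM 𝕜 p).hasSum
    (hasSum_single_infty_of_tendsto_zero w (tendsto_zero_iff_norm_tendsto_zero.1 hw))
  refine isCompactOperator_of_tendsto hsum (Eventually.of_forall fun s => ?_)
  exact Submodule.sum_mem (compactOperator (RingHom.id 𝕜) _ _) fun i _ =>
    isCompactOperator_mulCLM_single i (w i)

end Multiplication

section Reindex

variable {β E : Type*} [NormedAddCommGroup E] [NormedSpace 𝕜 E]

lemma memℓp_comp_equiv {f : α → E} (hf : Memℓp f p) (e : β ≃ α) : Memℓp (f ∘ e) p := by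
  rcases p.dichotomy with rfl | hp
  · rw [memℓp_infty_iff] at hf ⊢
    exact (e.surjective.range_comp fun i => ‖f i‖) ▸ hf
  · have hp : 0 < p.toReal := zero_lt_one.trans_le hp
    rw [memℓp_gen_iff hp] at hf ⊢
    exact (e.summable_iff (f := fun i => ‖f i‖ ^ p.toReal)).2 hf

variable (𝕜 E p) in
def compEquiv (e : β ≃ α) : lp (fun _ : α => E) p →ₗᵢ[𝕜] lp (fun _ : β => E) p where
  toFun u := ⟨u ∘ e, memℓp_comp_equiv (lp.memℓp u) e⟩
  map_add' _ _ := rfl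
  map_smul' _ _ := rfl
  norm_map' u := by
    rcases p.dichotomy with rfl | hp
    · exact e.iSup_comp (g := fun i => ‖u i‖)
    · have hp : 0 < p.toReal := zero_lt_one.trans_le hp
      simp only [norm_eq_tsum_rpow hp]
      exact congrArg (· ^ (1 / p.toReal)) (e.tsum_eq (fun i => ‖u i‖ ^ p.toReal))

@[simp] lemma compEquiv_apply (e : β ≃ α) (u : lp (fun _ : α => E) p) (b : β) :
    compEquiv 𝕜 p E e u b = u (e b) := rfl

end Reindex

end lp

/-- `S* = shift 1` and `S = shift (-1)`. -/
def shift (d : ℤ) : l2Z →L[ℂ] l2Z :=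
  (lp.compEquiv ℂ 2 ℂ (Equiv.addRight d)).toContinuousLinearMap

@[simp] lemma shift_apply (d : ℤ) (u : l2Z) (n : ℤ) : shift d u n = u (n + d) := rfl

section Potential

variable (q k : ℝ)

lemma abs_WvN1'_le (n : ℤ) : |WvN1' q k n| ≤ |q| := by
  rw [WvN1']
  split_ifs with hn
  · rfl
  · have hn1 : (1 : ℝ) ≤ |(n : ℝ)| := by exact_mod_cast Int.one_le_abs hn
    rw [abs_div, abs_mul]
    calc |q| * |Real.sin (k * n)| / |(n : ℝ)| ≤ |q| * |Real.sin (k * n)| :=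
          div_le_self (by positivity) hn1
      _ ≤ |q| := mul_le_of_le_one_right (abs_nonneg q) (Real.abs_sin_le_one _)

lemma abs_WvN1t_le (n : ℤ) : |WvN1t q k n| ≤ |q| := by
  rw [WvN1t, abs_mul]
  exact mul_le_of_le_one_right (abs_nonneg q) (Real.abs_sin_le_one _)

lemma tendsto_WvN1'_cofinite : Tendsto (WvN1' q k) cofinite (𝓝 0) := by
  have hinv : Tendsto (fun n : ℤ => |q| * ‖(n : ℝ)‖⁻¹) cofinite (𝓝 0) := by
    simpa using (tendsto_inv_atTop_zero.comp
      (tendsto_norm_cocompact_atTop.comp Int.tendsto_coe_cofinite)).const_mul |q|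
  refine squeeze_zero_norm' ?_ hinv
  filter_upwards [eventually_cofinite_ne 0] with n hn
  rw [WvN1', if_neg hn, Real.norm_eq_abs, Real.norm_eq_abs, abs_div, abs_mul, div_eq_mul_inv]
  gcongr
  exact mul_le_of_le_one_right (abs_nonneg q) (Real.abs_sin_le_one _)

lemma intCast_mul_WvN1' (n : ℤ) : (n : ℝ) * WvN1' q k n = WvN1t q k n := by
  rcases eq_or_ne n 0 with rfl | hn
  · simp [WvN1t]
  · rw [WvN1', if_neg hn, WvN1t]
    field_simp

def WvN1'Seq : lp (fun _ : ℤ => ℂ) ∞ :=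
  ⟨fun n => (WvN1' q k n : ℂ), memℓp_infty ⟨|q|, Set.forall_mem_range.2 fun n => by
    simpa using abs_WvN1'_le q k n⟩⟩

def WvN1tSeq : lp (fun _ : ℤ => ℂ) ∞ :=
  ⟨fun n => (WvN1t q k n : ℂ), memℓp_infty ⟨|q|, Set.forall_mem_range.2 fun n => by
    simpa using abs_WvN1t_le q k n⟩⟩

def KW' : l2Z →L[ℂ] l2Z :=
  (1 / 2 : ℂ) • (lp.mulCLM ℂ 2 (WvN1'Seq q k) ∘L (shift 1 + shift (-1)) +
    (shift 1 + shift (-1)) ∘L lp.mulCLM ℂ 2 (WvN1'Seq q k))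

def BW' : l2Z →L[ℂ] l2Z :=
  lp.mulCLM ℂ 2 (WvN1tSeq q k) ∘L (shift 1 - shift (-1)) -
    (shift 1 - shift (-1)) ∘L lp.mulCLM ℂ 2 (WvN1tSeq q k)

lemma KW'_apply (u : l2Z) (n : ℤ) : KW' q k u n = KW'fun q k u n := by
  simp only [KW', smul_apply, add_apply, ContinuousLinearMap.comp_apply, lp.coeFn_smul,
    lp.coeFn_add, Pi.smul_apply, Pi.add_apply, lp.mulCLM_apply_apply, shift_apply,
    ← sub_eq_add_neg, smul_eq_mul]
  rfl

lemma BW'_apply (u : l2Z) (n : ℤ) : BW' q k u n = BW'fun q k u n := by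
  simp only [BW', sub_apply, ContinuousLinearMap.comp_apply, lp.coeFn_sub, Pi.sub_apply,
    lp.mulCLM_apply_apply, shift_apply, ← sub_eq_add_neg]
  rfl

lemma isCompactOperator_KW' : IsCompactOperator (KW' q k) := by
  have hW : IsCompactOperator (lp.mulCLM ℂ 2 (WvN1'Seq q k)) :=
    lp.isCompactOperator_mulCLM_of_tendsto_zero _ <|
      Complex.ofReal_zero ▸ (Complex.continuous_ofReal.tendsto 0).comp (tendsto_WvN1'_cofinite q k)
  exact Submodule.smul_mem (compactOperator _ _ _) _
    (add_mem (hW.comp_clm _) (hW.clm_comp (shift 1 + shift (-1))))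

lemma commutator_WvN1'_A0fun1 (u : ℤ → ℂ) (n : ℤ) :
    Complex.I * ((WvN1' q k n : ℂ) * A0fun1 u n -
        A0fun1 (fun m => (WvN1' q k m : ℂ) * u m) n) =
      KW'fun q k u n + BW'fun q k u n := by
  have hWt : ∀ m : ℤ, (WvN1t q k m : ℂ) = m * WvN1' q k m := fun m => by
    rw [← intCast_mul_WvN1']; push_cast; rfl
  simp only [A0fun1, KW'fun, BW'fun, hWt]
  push_cast
  ring_nf
  rw [Complex.I_sq]
  ring

end Potential

theorem WvN1'_A0_commutator_general (q k : ℝ) :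
    ∃ KW BW : l2Z →L[ℂ] l2Z,
      (∀ (u : l2Z) (n : ℤ), (KW u) n = KW'fun q k (⇑u) n) ∧
      (∀ (u : l2Z) (n : ℤ), (BW u) n = BW'fun q k (⇑u) n) ∧
      IsCompactOperator (⇑KW) ∧
      ∀ u : ℤ → ℂ, (Function.support u).Finite → ∀ n : ℤ,
        Complex.I * ((WvN1' q k n : ℂ) * A0fun1 u n -
            A0fun1 (fun m => (WvN1' q k m : ℂ) * u m) n) =
          KW'fun q k u n + BW'fun q k u n :=
  ⟨KW' q k, BW' q k, KW'_apply q k, BW'_apply q k, isCompactOperator_KW' q k,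
    fun u _ => commutator_WvN1'_A0fun1 q k u⟩

/-- K_{W'} is compact, B_{W'} is bounded, and the commutator form [W', iA₀]
extends to the bounded operator K_{W'} + B_{W'}: for all finitely supported u,
i(W'(A₀u) − A₀(W'u)) = (K_{W'} + B_{W'})u. -/
theorem WvN1'_A0_commutator (q k : ℝ) (hk0 : 0 < k) (hk2 : k < 2 * Real.pi)
    (hkpi : k ≠ Real.pi) :
    ∃ KW BW : l2Z →L[ℂ] l2Z,
      (∀ (u : l2Z) (n : ℤ), (KW u) n = KW'fun q k (⇑u) n) ∧
      (∀ (u : l2Z) (n : ℤ), (BW u) n = BW'fun q k (⇑u) n) ∧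
      IsCompactOperator (⇑KW) ∧
      ∀ u : ℤ → ℂ, (Function.support u).Finite → ∀ n : ℤ,
        Complex.I * ((WvN1' q k n : ℂ) * A0fun1 u n -
            A0fun1 (fun m => (WvN1' q k m : ℂ) * u m) n) =
          KW'fun q k u n + BW'fun q k u n :=
  WvN1'_A0_commutator_general q k
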